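/- arXiv:2207.03304 — 4 statements merged into one kernel-verified Lean document; each statement's English description precedes it below -/
import Mathlib

section
/- For any real matrix B in R^{m×d} with m ≤ d, letting λ_1 ≥ λ_2 ≥ ... ≥ λ_m ≥ 0 be the eigenvalues of B^T B, for every positive integer l ≤ m there exists an l×l square submatrix F of B (obtained by choosing l rows and l columns) such that |det(F)| ≥ sqrt( (∏_{i=1}^l λ_i) / (binom(d,l) · binom(m,l)) ). -/
open Matrix Finset Equiv

private lemma expand_step {l k : ℕ} (M : Matrix (Fin l) (Fin k) ℝ) (N : Matrix (Fin k) (Fin l) ℝ) :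
    (M * N).det = ∑ φ : Fin l → Fin k, (∏ i, N (φ i) i) * (M.submatrix id φ).det := by
  have h : (M * N).det = ∑ φ : Fin l → Fin k, ∑ σ : Equiv.Perm (Fin l),
      ((Equiv.Perm.sign σ : ℤ) : ℝ) * ∏ i, M (σ i) (φ i) * N (φ i) i := by
    simp only [Matrix.det_apply', Matrix.mul_apply, Finset.prod_univ_sum, Finset.mul_sum,
      Fintype.piFinset_univ]
    rw [Finset.sum_comm]
  rw [h]
  refine Finset.sum_congr rfl fun φ _ => ?_
  rw [Matrix.det_apply', Finset.mul_sum]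
  refine Finset.sum_congr rfl fun σ _ => ?_
  simp only [Matrix.submatrix_apply, id_eq]
  rw [Finset.prod_mul_distrib]
  ring

lemma cauchyBinet {l k : ℕ} (M : Matrix (Fin l) (Fin k) ℝ) (N : Matrix (Fin k) (Fin l) ℝ) :
    (M * N).det = ∑ s : {s : Finset (Fin k) // s.card = l},
      (M.submatrix id ⇑(s.1.orderEmbOfFin s.2)).det *
      (N.submatrix ⇑(s.1.orderEmbOfFin s.2) id).det := by
  classical
  rw [expand_step]
  rw [← Finset.sum_filter_of_ne (p := fun φ : Fin l → Fin k => Function.Injective φ)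
    (fun φ _ hne => by
      by_contra hinj
      apply hne
      obtain ⟨i, j, hij, hne'⟩ := Function.not_injective_iff.mp hinj
      rw [Matrix.det_zero_of_column_eq hne' (fun x => by simp [hij]), mul_zero])]
  have key : ∑ p : {s : Finset (Fin k) // s.card = l} × Equiv.Perm (Fin l),
      (∏ x, N ((p.1.1.orderEmbOfFin p.1.2) (p.2 x)) x) *
        (M.submatrix id (⇑(p.1.1.orderEmbOfFin p.1.2) ∘ ⇑p.2)).det
      = ∑ φ ∈ Finset.univ.filter (fun φ : Fin l → Fin k => Function.Injective φ),
          (∏ i, N (φ i) i) * (M.submatrix id φ).det := by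
    refine Finset.sum_bij (fun p _ => ⇑(p.1.1.orderEmbOfFin p.1.2) ∘ ⇑p.2) ?_ ?_ ?_ ?_
    · intro p _
      simp only [Finset.mem_filter, Finset.mem_univ, true_and]
      exact (p.1.1.orderEmbOfFin p.1.2).injective.comp p.2.injective
    · intro p _ q _ hpq
      replace hpq : (⇑(p.1.1.orderEmbOfFin p.1.2) ∘ ⇑p.2)
          = (⇑(q.1.1.orderEmbOfFin q.1.2) ∘ ⇑q.2) := hpq
      have hrange : (p.1.1 : Set (Fin k)) = (q.1.1 : Set (Fin k)) := by
        have h1 : Set.range (⇑(p.1.1.orderEmbOfFin p.1.2) ∘ ⇑p.2) = (p.1.1 : Set (Fin k)) := by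
          rw [Set.range_comp, Equiv.range_eq_univ, Set.image_univ,
            Finset.range_orderEmbOfFin]
        have h2 : Set.range (⇑(q.1.1.orderEmbOfFin q.1.2) ∘ ⇑q.2) = (q.1.1 : Set (Fin k)) := by
          rw [Set.range_comp, Equiv.range_eq_univ, Set.image_univ,
            Finset.range_orderEmbOfFin]
        rw [← h1, ← h2, hpq]
      have hs : p.1 = q.1 := Subtype.ext (Finset.coe_injective hrange)
      obtain ⟨⟨s1, hs1⟩, σ⟩ := p
      obtain ⟨⟨s2, hs2⟩, τ⟩ := q
      have hss : s1 = s2 := congrArg Subtype.val hs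
      subst hss
      have hpr : hs1 = hs2 := rfl
      subst hpr
      simp only [Prod.mk.injEq, Subtype.mk.injEq, true_and]
      refine Equiv.ext fun x => ?_
      have := congrFun hpq x
      exact (s1.orderEmbOfFin hs1).injective this
    · intro φ hφ
      rw [Finset.mem_filter] at hφ
      have hinj := hφ.2
      have hcard : (Finset.univ.image φ).card = l := by
        rw [Finset.card_image_of_injective _ hinj, Finset.card_univ, Fintype.card_fin]
      set s : Finset (Fin k) := Finset.univ.image φ with hsdef
      have hmem : ∀ x, φ x ∈ s := fun x => Finset.mem_image.2 ⟨x, Finset.mem_univ x, rfl⟩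
      set e := s.orderEmbOfFin hcard
      have hbij : Function.Bijective (fun x : Fin l =>
          (s.orderIsoOfFin hcard).symm ⟨φ x, hmem x⟩) := by
        rw [Fintype.bijective_iff_injective_and_card]
        refine ⟨fun a b hab => ?_, rfl⟩
        have := congrArg (fun z => ((s.orderIsoOfFin hcard) z : Fin k)) hab
        simp only [OrderIso.apply_symm_apply] at this
        exact hinj this
      refine ⟨⟨⟨s, hcard⟩, Equiv.ofBijective _ hbij⟩, Finset.mem_univ _, ?_⟩
      funext x
      simp only [Function.comp_apply, Equiv.ofBijective_apply]
      show ((s.orderIsoOfFin hcard) ((s.orderIsoOfFin hcard).symm ⟨φ x, hmem x⟩) : Fin k) = φ x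
      rw [OrderIso.apply_symm_apply]
    · intro p _
      rfl
  rw [← key, Fintype.sum_prod_type]
  refine Finset.sum_congr rfl fun s _ => Eq.symm ?_
  have hsub : ∀ σ : Equiv.Perm (Fin l),
      M.submatrix id (⇑(s.1.orderEmbOfFin s.2) ∘ ⇑σ)
        = (M.submatrix id ⇑(s.1.orderEmbOfFin s.2)).submatrix id ⇑σ := by
    intro σ; rw [Matrix.submatrix_submatrix]; rfl
  calc (M.submatrix id ⇑(s.1.orderEmbOfFin s.2)).det *
        (N.submatrix ⇑(s.1.orderEmbOfFin s.2) id).det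
      = ∑ σ : Equiv.Perm (Fin l), (M.submatrix id ⇑(s.1.orderEmbOfFin s.2)).det *
          (((Equiv.Perm.sign σ : ℤ) : ℝ) * ∏ x, N ((s.1.orderEmbOfFin s.2) (σ x)) x) := by
        rw [← Finset.mul_sum]
        congr 1
        rw [Matrix.det_apply']
        exact Finset.sum_congr rfl fun σ _ => rfl
    _ = _ := by
        refine Finset.sum_congr rfl fun σ _ => ?_
        rw [hsub σ, Matrix.det_permute']
        ring

lemma diag_submatrix {k l : ℕ} (v : Fin k → ℝ) (e : Fin l → Fin k)
    (he : Function.Injective e) :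
    (Matrix.diagonal v).submatrix e e = Matrix.diagonal (v ∘ e) := by
  ext i j
  by_cases h : i = j
  · subst h; simp
  · rw [Matrix.submatrix_apply, Matrix.diagonal_apply_ne _ (fun hc => h (he hc)),
      Matrix.diagonal_apply_ne _ h]

lemma minor_sum_left {l m k : ℕ} (X : Matrix (Fin m) (Fin k) ℝ) (g : Fin l → Fin k) :
    ((Xᵀ * X).submatrix g g).det
      = ∑ s : {s : Finset (Fin m) // s.card = l},
          ((X.submatrix (⇑(s.1.orderEmbOfFin s.2)) g).det) ^ 2 := by
  have h : (Xᵀ * X).submatrix g g = (X.submatrix id g)ᵀ * (X.submatrix id g) := by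
    ext i j; simp [Matrix.mul_apply]
  rw [h, cauchyBinet]
  refine Finset.sum_congr rfl fun s _ => ?_
  have h1 : ((X.submatrix id g)ᵀ).submatrix id ⇑(s.1.orderEmbOfFin s.2)
      = (X.submatrix (⇑(s.1.orderEmbOfFin s.2)) g)ᵀ := by
    ext i j; simp
  have h2 : (X.submatrix id g).submatrix (⇑(s.1.orderEmbOfFin s.2)) id
      = X.submatrix (⇑(s.1.orderEmbOfFin s.2)) g := by
    ext i j; simp
  rw [h1, h2, Matrix.det_transpose, sq]

lemma minor_sum_right {l k d : ℕ} (X : Matrix (Fin k) (Fin d) ℝ) (f : Fin l → Fin k) :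
    ((X * Xᵀ).submatrix f f).det
      = ∑ t : {t : Finset (Fin d) // t.card = l},
          ((X.submatrix f (⇑(t.1.orderEmbOfFin t.2))).det) ^ 2 := by
  have h : (X * Xᵀ).submatrix f f = (X.submatrix f id) * (X.submatrix f id)ᵀ := by
    ext i j; simp [Matrix.mul_apply]
  rw [h, cauchyBinet]
  refine Finset.sum_congr rfl fun t _ => ?_
  have h1 : (X.submatrix f id).submatrix id ⇑(t.1.orderEmbOfFin t.2)
      = X.submatrix f (⇑(t.1.orderEmbOfFin t.2)) := by
    ext i j; simp
  have h2 : ((X.submatrix f id)ᵀ).submatrix (⇑(t.1.orderEmbOfFin t.2)) id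
      = (X.submatrix f (⇑(t.1.orderEmbOfFin t.2)))ᵀ := by
    ext i j; simp
  rw [h1, h2, Matrix.det_transpose, sq]


/-- Lemma (Larsen): for `B ∈ ℝ^{m×d}` with `m ≤ d` and eigenvalues `λ₁ ≥ ⋯ ≥ λ_d ≥ 0`
of `Bᵀ B` (given via an orthogonal diagonalization, listed in decreasing order), for every
positive `l ≤ m` there is an `l × l` submatrix `F` of `B` with
`|det F| ≥ sqrt(∏_{i<l} λᵢ / (C(d,l)·C(m,l)))`. -/
theorem stmt_0 {m d : ℕ} (hmd : m ≤ d) (B : Matrix (Fin m) (Fin d) ℝ)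
    (lam : Fin d → ℝ)
    (hmono : ∀ i j : Fin d, i ≤ j → lam j ≤ lam i)
    (hdiag : ∃ U : Matrix (Fin d) (Fin d) ℝ,
      Uᵀ * U = 1 ∧ Bᵀ * B = Uᵀ * Matrix.diagonal lam * U)
    (l : ℕ) (hl : 0 < l) (hlm : l ≤ m) :
    ∃ (f : Fin l → Fin m) (g : Fin l → Fin d),
      Function.Injective f ∧ Function.Injective g ∧
      Real.sqrt ((∏ i : Fin l, lam (Fin.castLE (hlm.trans hmd) i)) /
          ((d.choose l : ℝ) * (m.choose l : ℝ)))
        ≤ |(B.submatrix f g).det| := by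
  classical
  obtain ⟨U, hU, hB⟩ := hdiag
  have hld : l ≤ d := hlm.trans hmd
  have hUU : U * Uᵀ = 1 := mul_eq_one_comm.mp hU
  have hC : (B * Uᵀ)ᵀ * (B * Uᵀ) = Matrix.diagonal lam := by
    have h1 : (B * Uᵀ)ᵀ * (B * Uᵀ) = U * (Bᵀ * B) * Uᵀ := by
      rw [Matrix.transpose_mul, Matrix.transpose_transpose]
      simp only [Matrix.mul_assoc]
    rw [h1, hB]
    calc U * (Uᵀ * Matrix.diagonal lam * U) * Uᵀ
        = (U * Uᵀ) * Matrix.diagonal lam * (U * Uᵀ) := by simp only [Matrix.mul_assoc]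
      _ = Matrix.diagonal lam := by rw [hUU, Matrix.one_mul, Matrix.mul_one]
  have hlam0 : ∀ i, 0 ≤ lam i := by
    intro i
    have h1 : ((B * Uᵀ)ᵀ * (B * Uᵀ)) i i = Matrix.diagonal lam i i := by rw [hC]
    rw [Matrix.mul_apply, Matrix.diagonal_apply_eq] at h1
    rw [← h1]
    exact Finset.sum_nonneg fun j _ => by
      rw [Matrix.transpose_apply]; exact mul_self_nonneg _
  set sq : Fin d → ℝ := fun i => Real.sqrt (lam i) with hsq
  set A : Matrix (Fin d) (Fin d) ℝ := Matrix.diagonal sq * U with hA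
  have hdd : Matrix.diagonal sq * Matrix.diagonal sq = Matrix.diagonal lam := by
    rw [Matrix.diagonal_mul_diagonal]
    exact congrArg _ (funext fun i => Real.mul_self_sqrt (hlam0 i))
  have hAtA : Aᵀ * A = Bᵀ * B := by
    rw [hA, Matrix.transpose_mul, Matrix.diagonal_transpose, hB]
    calc Uᵀ * Matrix.diagonal sq * (Matrix.diagonal sq * U)
        = Uᵀ * (Matrix.diagonal sq * Matrix.diagonal sq) * U := by simp only [Matrix.mul_assoc]
      _ = Uᵀ * Matrix.diagonal lam * U := by rw [hdd]
  have hAAt : A * Aᵀ = Matrix.diagonal lam := by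
    rw [hA, Matrix.transpose_mul, Matrix.diagonal_transpose]
    calc Matrix.diagonal sq * U * (Uᵀ * Matrix.diagonal sq)
        = Matrix.diagonal sq * (U * Uᵀ) * Matrix.diagonal sq := by simp only [Matrix.mul_assoc]
      _ = Matrix.diagonal lam := by rw [hUU, Matrix.mul_one, hdd]
  -- the double sum of squared minors of B
  have key : (∑ p : {t : Finset (Fin d) // t.card = l} × {s : Finset (Fin m) // s.card = l},
        ((B.submatrix (⇑(p.2.1.orderEmbOfFin p.2.2)) (⇑(p.1.1.orderEmbOfFin p.1.2))).det) ^ 2)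
      = ∑ t : {t : Finset (Fin d) // t.card = l}, ∏ i, lam ((t.1.orderEmbOfFin t.2) i) := by
    rw [Fintype.sum_prod_type]
    calc (∑ t : {t : Finset (Fin d) // t.card = l}, ∑ s : {s : Finset (Fin m) // s.card = l},
          ((B.submatrix (⇑(s.1.orderEmbOfFin s.2)) (⇑(t.1.orderEmbOfFin t.2))).det) ^ 2)
        = ∑ t : {t : Finset (Fin d) // t.card = l},
            ((Bᵀ * B).submatrix (⇑(t.1.orderEmbOfFin t.2)) (⇑(t.1.orderEmbOfFin t.2))).det :=
          Finset.sum_congr rfl fun t _ => (minor_sum_left B _).symm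
      _ = ∑ t : {t : Finset (Fin d) // t.card = l}, ∑ t' : {t : Finset (Fin d) // t.card = l},
            ((A.submatrix (⇑(t'.1.orderEmbOfFin t'.2)) (⇑(t.1.orderEmbOfFin t.2))).det) ^ 2 := by
          refine Finset.sum_congr rfl fun t _ => ?_
          rw [← hAtA]
          exact minor_sum_left A _
      _ = ∑ t' : {t : Finset (Fin d) // t.card = l}, ∑ t : {t : Finset (Fin d) // t.card = l},
            ((A.submatrix (⇑(t'.1.orderEmbOfFin t'.2)) (⇑(t.1.orderEmbOfFin t.2))).det) ^ 2 :=
          Finset.sum_comm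
      _ = ∑ t' : {t : Finset (Fin d) // t.card = l}, ∏ i, lam ((t'.1.orderEmbOfFin t'.2) i) := by
          refine Finset.sum_congr rfl fun t' _ => ?_
          rw [← minor_sum_right A, hAAt,
            diag_submatrix _ _ (t'.1.orderEmbOfFin t'.2).injective, Matrix.det_diagonal]
          rfl
  -- the canonical index sets
  have ht0c : ((Finset.univ.image (Fin.castLE hld)) : Finset (Fin d)).card = l := by
    rw [Finset.card_image_of_injective _ (Fin.castLE_injective hld), Finset.card_univ,
      Fintype.card_fin]
  have hs0c : ((Finset.univ.image (Fin.castLE hlm)) : Finset (Fin m)).card = l := by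
    rw [Finset.card_image_of_injective _ (Fin.castLE_injective hlm), Finset.card_univ,
      Fintype.card_fin]
  have hed : ⇑((Finset.univ.image (Fin.castLE hld)).orderEmbOfFin ht0c) = Fin.castLE hld :=
    (Finset.orderEmbOfFin_unique ht0c
      (fun x => Finset.mem_image_of_mem _ (Finset.mem_univ x))
      (Fin.strictMono_castLE hld)).symm
  have hbound : (∏ i : Fin l, lam (Fin.castLE hld i))
      ≤ ∑ t : {t : Finset (Fin d) // t.card = l}, ∏ i, lam ((t.1.orderEmbOfFin t.2) i) := by
    have h := Finset.single_le_sum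
      (f := fun t : {t : Finset (Fin d) // t.card = l} => ∏ i, lam ((t.1.orderEmbOfFin t.2) i))
      (fun t _ => Finset.prod_nonneg fun i _ => hlam0 _)
      (Finset.mem_univ (⟨_, ht0c⟩ : {t : Finset (Fin d) // t.card = l}))
    simpa [hed] using h
  have hcardT : Fintype.card {t : Finset (Fin d) // t.card = l} = d.choose l := by
    simpa using Fintype.card_finset_len (α := Fin d) l
  have hcardS : Fintype.card {s : Finset (Fin m) // s.card = l} = m.choose l := by
    simpa using Fintype.card_finset_len (α := Fin m) l
  have hdc : ((d.choose l : ℝ)) ≠ 0 := Nat.cast_ne_zero.2 (Nat.choose_pos hld).ne'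
  have hmc : ((m.choose l : ℝ)) ≠ 0 := Nat.cast_ne_zero.2 (Nat.choose_pos hlm).ne'
  set c : ℝ := (∏ i : Fin l, lam (Fin.castLE hld i)) /
    ((d.choose l : ℝ) * (m.choose l : ℝ)) with hc
  have hsumc : (∑ _p : {t : Finset (Fin d) // t.card = l} × {s : Finset (Fin m) // s.card = l}, c)
      = ∏ i : Fin l, lam (Fin.castLE hld i) := by
    rw [Finset.sum_const, Finset.card_univ, Fintype.card_prod, hcardT, hcardS, nsmul_eq_mul,
      Nat.cast_mul, hc]
    field_simp
  have hne : Nonempty ({t : Finset (Fin d) // t.card = l} × {s : Finset (Fin m) // s.card = l}) :=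
    ⟨(⟨_, ht0c⟩, ⟨_, hs0c⟩)⟩
  obtain ⟨p, _, hp⟩ := Finset.exists_le_of_sum_le (Finset.univ_nonempty)
    (by rw [hsumc, key]; exact hbound :
      (∑ _p : {t : Finset (Fin d) // t.card = l} × {s : Finset (Fin m) // s.card = l}, c)
        ≤ ∑ p : {t : Finset (Fin d) // t.card = l} × {s : Finset (Fin m) // s.card = l},
          ((B.submatrix (⇑(p.2.1.orderEmbOfFin p.2.2)) (⇑(p.1.1.orderEmbOfFin p.1.2))).det) ^ 2)
  refine ⟨⇑(p.2.1.orderEmbOfFin p.2.2), ⇑(p.1.1.orderEmbOfFin p.1.2),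
    (p.2.1.orderEmbOfFin p.2.2).injective, (p.1.1.orderEmbOfFin p.1.2).injective, ?_⟩
  calc Real.sqrt ((∏ i : Fin l, lam (Fin.castLE (hlm.trans hmd) i)) /
        ((d.choose l : ℝ) * (m.choose l : ℝ)))
      ≤ Real.sqrt (((B.submatrix (⇑(p.2.1.orderEmbOfFin p.2.2))
          (⇑(p.1.1.orderEmbOfFin p.1.2))).det) ^ 2) := Real.sqrt_le_sqrt hp
    _ = |(B.submatrix (⇑(p.2.1.orderEmbOfFin p.2.2)) (⇑(p.1.1.orderEmbOfFin p.1.2))).det| :=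
        Real.sqrt_sq_eq_abs _
end

section
/- If a linear algorithm (straight-line program where each step computes x_{d+l} = λ_{d+l} x_j + μ_{d+l} x_i with |λ_{d+l}|, |μ_{d+l}| < r and r > 1/2) computes the linear transformation given by a real matrix B, then the number of steps t satisfies t ≥ log(Δ(B)) / log(2r), where Δ(B) is the maximum absolute value of the determinant over all square submatrices of B. -/
open Matrix

/-- A linear algorithm with `t` steps on inputs `1, x_1, …, x_d` computes the linear
transformation `B ∈ ℝ^{m×d}`: value `0` is the constant `1`, values `1..d` are the inputs,
value `d+1+l` equals `λ_l · v_{i_l} + μ_l · v_{j_l}` with `i_l, j_l < d+1+l`, and the `m`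
outputs `(Bx)_p` appear among the computed values at positions `k p`. -/
def ComputesLin {m d : ℕ} (t : ℕ) (lam mu : Fin t → ℝ) (ii jj : Fin t → ℕ)
    (k : Fin m → ℕ) (B : Matrix (Fin m) (Fin d) ℝ) : Prop :=
  (∀ l : Fin t, ii l < d + 1 + (l : ℕ) ∧ jj l < d + 1 + (l : ℕ)) ∧
  (∀ p : Fin m, k p < d + 1 + t) ∧
  ∀ x : Fin d → ℝ, ∃ v : ℕ → ℝ,
    v 0 = 1 ∧ (∀ q : Fin d, v ((q : ℕ) + 1) = x q) ∧
    (∀ l : Fin t, v (d + 1 + (l : ℕ)) = lam l * v (ii l) + mu l * v (jj l)) ∧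
    ∀ p : Fin m, B.mulVec x p = v (k p)



noncomputable def cvec (d t : ℕ) (lam mu : Fin t → ℝ) (ii jj : Fin t → ℕ)
    (hij : ∀ l : Fin t, ii l < d + 1 + (l : ℕ) ∧ jj l < d + 1 + (l : ℕ)) :
    ℕ → Fin (d + 1) → ℝ
  | n =>
    if h : n < d + 1 then Pi.single (⟨n, h⟩ : Fin (d + 1)) 1
    else if h2 : n - (d + 1) < t then
      lam ⟨n - (d + 1), h2⟩ • cvec d t lam mu ii jj hij (ii ⟨n - (d + 1), h2⟩)
        + mu ⟨n - (d + 1), h2⟩ • cvec d t lam mu ii jj hij (jj ⟨n - (d + 1), h2⟩)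
    else 0
  termination_by n => n
  decreasing_by
  all_goals
    rename_i a
    have h' : ¬ a < d + 1 := h
    first
    | (have := (hij ⟨a - (d + 1), h2⟩).1; simp only [Fin.val_mk] at this; omega)
    | (have := (hij ⟨a - (d + 1), h2⟩).2; simp only [Fin.val_mk] at this; omega)

lemma cvec_lt (d t : ℕ) (lam mu : Fin t → ℝ) (ii jj : Fin t → ℕ)
    (hij : ∀ l : Fin t, ii l < d + 1 + (l : ℕ) ∧ jj l < d + 1 + (l : ℕ))
    (n : ℕ) (h : n < d + 1) :
    cvec d t lam mu ii jj hij n = Pi.single (⟨n, h⟩ : Fin (d + 1)) 1 := by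
  rw [cvec]; simp [h]

lemma cvec_step (d t : ℕ) (lam mu : Fin t → ℝ) (ii jj : Fin t → ℕ)
    (hij : ∀ l : Fin t, ii l < d + 1 + (l : ℕ) ∧ jj l < d + 1 + (l : ℕ)) (l : Fin t) :
    cvec d t lam mu ii jj hij (d + 1 + (l : ℕ)) =
      lam l • cvec d t lam mu ii jj hij (ii l) + mu l • cvec d t lam mu ii jj hij (jj l) := by
  rw [cvec]
  have h1 : ¬ d + 1 + (l : ℕ) < d + 1 := by omega
  have h2 : d + 1 + (l : ℕ) - (d + 1) = (l : ℕ) := by omega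
  simp [h1, h2, l.isLt, Fin.eta]

lemma det_ite_le_one : ∀ (l N : ℕ) (F G : Fin l → Fin N), Function.Injective G →
    |Matrix.det (Matrix.of fun q p => if G p = F q then (1 : ℝ) else 0)| ≤ 1 := by
  intro l
  induction l with
  | zero => intro N F G _; simp [Matrix.det_fin_zero]
  | succ l ih =>
    intro N F G hG
    rw [Matrix.det_succ_row_zero]
    refine le_trans (Finset.abs_sum_le_sum_abs _ _) ?_
    have hbound : ∀ j : Fin (l + 1),
        |(-1 : ℝ) ^ (j : ℕ) * Matrix.of (fun q p => if G p = F q then (1 : ℝ) else 0) 0 j *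
          Matrix.det ((Matrix.of fun q p => if G p = F q then (1 : ℝ) else 0).submatrix
            Fin.succ j.succAbove)| ≤
        (if G j = F 0 then (1:ℝ) else 0) := by
      intro j
      have hsub : ((Matrix.of fun q p => if G p = F q then (1 : ℝ) else 0).submatrix
            Fin.succ j.succAbove) =
          Matrix.of (fun q p => if (G ∘ j.succAbove) p = (F ∘ Fin.succ) q then (1 : ℝ) else 0) := by
        ext q p; simp [Matrix.submatrix_apply]
      have hminor := ih N (F ∘ Fin.succ) (G ∘ j.succAbove)
        (hG.comp (Fin.succAbove_right_injective))
      rw [hsub]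
      rw [abs_mul, abs_mul, abs_pow, abs_neg, abs_one, one_pow, one_mul]
      by_cases h : G j = F 0
      · simp only [h, Matrix.of_apply, if_true, abs_one, one_mul]
        simpa using hminor
      · simp [h]
    refine le_trans (Finset.sum_le_sum fun j _ => hbound j) ?_
    rw [Finset.sum_boole]
    norm_cast
    exact Finset.card_le_one.mpr fun a ha b hb => by
      simp only [Finset.mem_filter] at ha hb
      exact hG (ha.2.trans hb.2.symm)

lemma key (d t : ℕ) (lam mu : Fin t → ℝ) (ii jj : Fin t → ℕ)
    (hij : ∀ l : Fin t, ii l < d + 1 + (l : ℕ) ∧ jj l < d + 1 + (l : ℕ))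
    (r : ℝ) (hr : 1 / 2 < r) (hcoef : ∀ l : Fin t, |lam l| < r ∧ |mu l| < r) :
    ∀ s, s ≤ t → ∀ (l : ℕ) (F : Fin l → ℕ) (G : Fin l → Fin (d + 1)),
      (∀ q, F q < d + 1 + s) → Function.Injective G →
      |Matrix.det (Matrix.of fun q p => cvec d t lam mu ii jj hij (F q) (G p))| ≤ (2 * r) ^ s := by
  have h2r : (1 : ℝ) < 2 * r := by linarith
  intro s
  induction s with
  | zero =>
    intro _ l F G hF hG
    simp only [pow_zero]
    have : (Matrix.of fun q p => cvec d t lam mu ii jj hij (F q) (G p)) =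
        Matrix.of (fun q p => if G p = (⟨F q, hF q⟩ : Fin (d + 1)) then (1 : ℝ) else 0) := by
      ext q p
      rw [Matrix.of_apply, Matrix.of_apply, cvec_lt d t lam mu ii jj hij (F q) (hF q),
        Pi.single_apply]
    rw [this]
    exact det_ite_le_one l (d + 1) _ G hG
  | succ s ihs =>
    intro hst l F G hF hG
    have hs : s ≤ t := by omega
    have ih := ihs hs
    have hpow : (0:ℝ) < (2 * r) ^ s := by positivity
    by_cases hex : ∃ q, F q = d + 1 + s
    · obtain ⟨q0, hq0⟩ := hex
      by_cases hdup : ∃ q1, q1 ≠ q0 ∧ F q1 = d + 1 + s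
      · obtain ⟨q1, hne, hq1⟩ := hdup
        have : Matrix.det (Matrix.of fun q p => cvec d t lam mu ii jj hij (F q) (G p)) = 0 := by
          apply Matrix.det_zero_of_row_eq hne
          funext p
          simp [hq0, hq1]
        rw [this, abs_zero]
        positivity
      · push_neg at hdup
        have hother : ∀ q, q ≠ q0 → F q < d + 1 + s := by
          intro q hq
          have := hF q
          have := hdup q hq
          omega
        set L : Fin t := ⟨s, by omega⟩ with hL
        set M := Matrix.of fun q p => cvec d t lam mu ii jj hij (F q) (G p) with hM
        have hrow : M q0 = lam L • (fun p => cvec d t lam mu ii jj hij (ii L) (G p))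
            + mu L • (fun p => cvec d t lam mu ii jj hij (jj L) (G p)) := by
          funext p
          have : cvec d t lam mu ii jj hij (F q0) = cvec d t lam mu ii jj hij (d + 1 + (L : ℕ)) := by
            rw [hq0]
          rw [hM]
          simp only [Matrix.of_apply]
          rw [this, cvec_step]
          simp
        have hMA : M.updateRow q0 (fun p => cvec d t lam mu ii jj hij (ii L) (G p)) =
            Matrix.of fun q p => cvec d t lam mu ii jj hij (Function.update F q0 (ii L) q) (G p) := by
          ext q p
          rw [Matrix.updateRow_apply]
          by_cases h : q = q0 <;> simp [h, Function.update_apply, hM]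
        have hMB : M.updateRow q0 (fun p => cvec d t lam mu ii jj hij (jj L) (G p)) =
            Matrix.of fun q p => cvec d t lam mu ii jj hij (Function.update F q0 (jj L) q) (G p) := by
          ext q p
          rw [Matrix.updateRow_apply]
          by_cases h : q = q0 <;> simp [h, Function.update_apply, hM]
        have hdet : M.det = lam L * (M.updateRow q0
              (fun p => cvec d t lam mu ii jj hij (ii L) (G p))).det
            + mu L * (M.updateRow q0 (fun p => cvec d t lam mu ii jj hij (jj L) (G p))).det := by
          conv_lhs => rw [← Matrix.updateRow_eq_self M q0, hrow]
          rw [Matrix.det_updateRow_add, Matrix.det_updateRow_smul, Matrix.det_updateRow_smul]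
        have hiL : ii L < d + 1 + s := (hij L).1
        have hjL : jj L < d + 1 + s := (hij L).2
        have hFA : ∀ q, Function.update F q0 (ii L) q < d + 1 + s := by
          intro q
          rcases eq_or_ne q q0 with h | h
          · rw [h, Function.update_self]; exact hiL
          · rw [Function.update_of_ne h]; exact hother q h
        have hFB : ∀ q, Function.update F q0 (jj L) q < d + 1 + s := by
          intro q
          rcases eq_or_ne q q0 with h | h
          · rw [h, Function.update_self]; exact hjL
          · rw [Function.update_of_ne h]; exact hother q h
        have bA := ih l (Function.update F q0 (ii L)) G hFA hG
        have bB := ih l (Function.update F q0 (jj L)) G hFB hG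
        rw [hdet]
        calc |lam L * (M.updateRow q0 (fun p => cvec d t lam mu ii jj hij (ii L) (G p))).det
            + mu L * (M.updateRow q0 (fun p => cvec d t lam mu ii jj hij (jj L) (G p))).det|
            ≤ |lam L| * |(M.updateRow q0 (fun p => cvec d t lam mu ii jj hij (ii L) (G p))).det|
              + |mu L| * |(M.updateRow q0 (fun p => cvec d t lam mu ii jj hij (jj L) (G p))).det| := by
              refine le_trans (abs_add_le _ _) ?_
              rw [abs_mul, abs_mul]
          _ ≤ r * (2 * r) ^ s + r * (2 * r) ^ s := by
              rw [hMA, hMB]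
              have h1 := (hcoef L).1
              have h2 := (hcoef L).2
              have l1 : |lam L| * _ ≤ r * (2 * r) ^ s :=
                mul_le_mul (le_of_lt h1) bA (abs_nonneg _) (by linarith)
              have l2 : |mu L| * _ ≤ r * (2 * r) ^ s :=
                mul_le_mul (le_of_lt h2) bB (abs_nonneg _) (by linarith)
              exact add_le_add l1 l2
          _ = (2 * r) ^ (s + 1) := by ring
    · push_neg at hex
      have hF' : ∀ q, F q < d + 1 + s := by
        intro q
        have := hF q
        have := hex q
        omega
      refine le_trans (ih l F G hF' hG) ?_
      exact pow_le_pow_right₀ (le_of_lt h2r) (Nat.le_succ s)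

lemma v_eq (d t : ℕ) (lam mu : Fin t → ℝ) (ii jj : Fin t → ℕ)
    (hij : ∀ l : Fin t, ii l < d + 1 + (l : ℕ) ∧ jj l < d + 1 + (l : ℕ))
    (x : Fin d → ℝ) (v : ℕ → ℝ) (h0 : v 0 = 1) (hx : ∀ q : Fin d, v ((q : ℕ) + 1) = x q)
    (hstep : ∀ l : Fin t, v (d + 1 + (l : ℕ)) = lam l * v (ii l) + mu l * v (jj l)) :
    ∀ n, n < d + 1 + t →
      v n = ∑ p, cvec d t lam mu ii jj hij n p * (Fin.cons 1 x : Fin (d + 1) → ℝ) p := by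
  intro n
  induction n using Nat.strong_induction_on with
  | _ n IH =>
    intro hn
    by_cases h : n < d + 1
    · rw [cvec_lt d t lam mu ii jj hij n h]
      have hsum : ∑ p, Pi.single (⟨n, h⟩ : Fin (d + 1)) (1:ℝ) p * Fin.cons 1 x p
          = (Fin.cons 1 x : Fin (d + 1) → ℝ) (⟨n, h⟩ : Fin (d + 1)) := by
        rw [Finset.sum_eq_single (⟨n, h⟩ : Fin (d + 1))]
        · simp
        · intro b _ hb; rw [Pi.single_apply, if_neg hb, zero_mul]
        · simp
      rw [hsum]
      rcases n with _ | q
      · simpa using h0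
      · have hq : q < d := by omega
        have : (⟨q + 1, h⟩ : Fin (d + 1)) = Fin.succ ⟨q, hq⟩ := rfl
        rw [this, Fin.cons_succ]
        exact hx ⟨q, hq⟩
    · have hl : n - (d + 1) < t := by omega
      set L : Fin t := ⟨n - (d + 1), hl⟩ with hLdef
      have hnL : n = d + 1 + (L : ℕ) := by simp [hLdef]; omega
      have hii := (hij L).1
      have hjj := (hij L).2
      have hIH1 := IH (ii L) (by omega) (by omega)
      have hIH2 := IH (jj L) (by omega) (by omega)
      rw [hnL, hstep L, cvec_step, hIH1, hIH2]
      rw [Finset.mul_sum, Finset.mul_sum, ← Finset.sum_add_distrib]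
      congr 1
      funext p
      simp only [Pi.add_apply, Pi.smul_apply, smul_eq_mul]
      ring


/-- Morgenstern's lemma: a linear algorithm computing `B` with all coefficients bounded in
absolute value by `r > 1/2` uses at least `log Δ(B) / log (2r)` operations, where `Δ(B)` is the
maximal absolute determinant of a square submatrix of `B` (stated for every square submatrix). -/
theorem stmt_1 {m d : ℕ} (B : Matrix (Fin m) (Fin d) ℝ) (r : ℝ) (hr : 1 / 2 < r)
    (t : ℕ) (lam mu : Fin t → ℝ) (ii jj : Fin t → ℕ) (k : Fin m → ℕ)
    (hcoef : ∀ l : Fin t, |lam l| < r ∧ |mu l| < r)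
    (hcomp : ComputesLin t lam mu ii jj k B) :
    ∀ (l : ℕ) (f : Fin l → Fin m) (g : Fin l → Fin d),
      Function.Injective f → Function.Injective g →
      Real.log |(B.submatrix f g).det| / Real.log (2 * r) ≤ (t : ℝ) := by
  obtain ⟨hij, hk, hval⟩ := hcomp
  set c := cvec d t lam mu ii jj hij with hc
  have h2r : (1 : ℝ) < 2 * r := by linarith
  have hBx : ∀ (x : Fin d → ℝ) (p : Fin m),
      B.mulVec x p = ∑ p', c (k p) p' * (Fin.cons 1 x : Fin (d + 1) → ℝ) p' := by
    intro x p
    obtain ⟨v, h0, hxv, hstep, hout⟩ := hval x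
    rw [hout p, v_eq d t lam mu ii jj hij x v h0 hxv hstep (k p) (hk p)]
  have hsum_expand : ∀ (w : Fin (d + 1) → ℝ) (x : Fin d → ℝ),
      ∑ p', w p' * (Fin.cons 1 x : Fin (d + 1) → ℝ) p'
        = w 0 + ∑ q : Fin d, w q.succ * x q := by
    intro w x
    rw [Fin.sum_univ_succ]
    simp
  have hW0 : ∀ p : Fin m, c (k p) 0 = 0 := by
    intro p
    have := hBx 0 p
    rw [Matrix.mulVec_zero, hsum_expand] at this
    simpa using this.symm
  have hBq : ∀ (p : Fin m) (q : Fin d), B p q = c (k p) q.succ := by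
    intro p q
    have h1 := hBx (Pi.single q 1) p
    rw [hsum_expand, hW0 p, zero_add] at h1
    have h2 : ∑ q' : Fin d, c (k p) q'.succ * (Pi.single q 1 : Fin d → ℝ) q' = c (k p) q.succ := by
      rw [Finset.sum_eq_single q]
      · simp
      · intro b _ hb; rw [Pi.single_apply, if_neg hb, mul_zero]
      · simp
    have h3 : B.mulVec (Pi.single q 1) p = B p q := by
      simp [Matrix.mulVec, dotProduct, Pi.single_apply, mul_ite, Finset.sum_ite_eq']
    rw [h3, h2] at h1
    exact h1
  intro l f g hf hg
  have hsub : B.submatrix f g =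
      Matrix.of fun q p => c (k (f q)) ((fun p' => (g p').succ) p) := by
    ext q p
    simp [Matrix.submatrix_apply, hBq]
  have hGinj : Function.Injective (fun p' : Fin l => (g p').succ) :=
    fun a b hab => hg (Fin.succ_injective d (by simpa using hab))
  have hbound : |(B.submatrix f g).det| ≤ (2 * r) ^ t := by
    rw [hsub]
    exact key d t lam mu ii jj hij r hr hcoef t le_rfl l (fun q => k (f q)) _
      (fun q => hk (f q)) hGinj
  rcases eq_or_lt_of_le (abs_nonneg (B.submatrix f g).det) with h0 | h0
  · rw [← h0, Real.log_zero, zero_div]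
    exact Nat.cast_nonneg t
  · have hlog : Real.log |(B.submatrix f g).det| ≤ Real.log ((2 * r) ^ t) :=
      Real.log_le_log h0 hbound
    rw [Real.log_pow] at hlog
    rw [div_le_iff₀ (Real.log_pos h2r)]
    exact hlog
end

section
/- Let B ∈ R^{m×d} with m ≤ d, let λ_1 ≥ ... ≥ λ_m ≥ 0 be the eigenvalues of B^T B, and suppose that the l-th largest eigenvalue satisfies λ_l ≥ ds/(3m) for some s > 0. Then there exists an l×l square submatrix F of B with |det(F)| ≥ (s·l²/(3 e² m²))^{l/2}. -/
/-!
By Cauchy–Binet, `∑_{f,g} det (B_{f,g})²` (over all `f : Fin l → Fin m`, `g : Fin l → Fin d`)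
equals `l! · ∑_g det ((BᵀB)_{g,g})`, so it depends only on the Gram matrix `BᵀB`. Replacing `B`
by `W = diag(√λ) U`, which has the same Gram matrix and `W Wᵀ = diag λ`, the same sum counted the
other way is `l! · ∑_f det (diag λ)_{f,f} ≥ l!² λ₁ ⋯ λ_l ≥ l!² (ds/3m)^l`. It has `m^l d^l` terms,
so the largest squared minor is at least `l!² (ds/3m)^l / (md)^l`, and `l! ≥ (l/e)^l` finishes.
-/

open Matrix

theorem factorial_nsmul_le_sum_of_comp_perm {ι α M : Type*} [Fintype ι] [DecidableEq ι]
    [Fintype α] [DecidableEq α]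
    [AddCommMonoid M] [PartialOrder M] [IsOrderedAddMonoid M] {F : (ι → α) → M}
    (hF : ∀ f, 0 ≤ F f) (hperm : ∀ f (σ : Equiv.Perm ι), F (f ∘ σ) = F f)
    {f₀ : ι → α} (hf₀ : Function.Injective f₀) :
    (Fintype.card ι).factorial • F f₀ ≤ ∑ f, F f := by
  have hinj : Function.Injective fun σ : Equiv.Perm ι => f₀ ∘ σ := fun σ τ h =>
    Equiv.ext fun i => hf₀ (congrFun h i)
  calc (Fintype.card ι).factorial • F f₀ = ∑ σ : Equiv.Perm ι, F (f₀ ∘ σ) := by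
        simp only [hperm, Finset.sum_const, Finset.card_univ, Fintype.card_perm]
    _ = ∑ f ∈ Finset.univ.image fun σ : Equiv.Perm ι => f₀ ∘ σ, F f :=
        (Finset.sum_image fun σ _ τ _ h => hinj h).symm
    _ ≤ ∑ f, F f := Finset.sum_le_univ_sum_of_nonneg hF

namespace Matrix

variable {ι m n p R : Type*} [Fintype ι] [DecidableEq ι] [CommRing R]

theorem det_mul_eq_sum_prod_mul_det_submatrix [Fintype n] (M : Matrix ι n R) (N : Matrix n ι R) :
    (M * N).det = ∑ φ : ι → n, (∏ i, N (φ i) i) * (M.submatrix id φ).det := by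
  calc
    (M * N).det = ∑ φ : ι → n, ∑ σ : Equiv.Perm ι,
        (Equiv.Perm.sign σ : R) * ∏ i, M (σ i) (φ i) * N (φ i) i := by
      simp only [det_apply', mul_apply, Finset.prod_univ_sum, Finset.mul_sum,
        Fintype.piFinset_univ]
      exact Finset.sum_comm
    _ = _ := by
      refine Finset.sum_congr rfl fun φ _ => ?_
      simp only [det_apply', Finset.mul_sum, Finset.prod_mul_distrib, submatrix_apply, id_eq]
      exact Finset.sum_congr rfl fun σ _ => by ring

/-- Cauchy–Binet, summed over all maps `φ` rather than over increasing ones, so that every set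
of indices is counted `(card ι)!` times. -/
theorem sum_det_submatrix_mul_det_submatrix [Fintype n] (M : Matrix ι n R) (N : Matrix n ι R) :
    ∑ φ : ι → n, (M.submatrix id φ).det * (N.submatrix φ id).det
      = (Fintype.card ι).factorial * (M * N).det := by
  have hσ (σ : Equiv.Perm ι) : ∑ φ : ι → n, (M.submatrix id φ).det *
      ((Equiv.Perm.sign σ : R) * ∏ i, N (φ (σ i)) i) = (M * N).det := by
    rw [det_mul_eq_sum_prod_mul_det_submatrix,
      ← (Equiv.arrowCongr σ (Equiv.refl n)).sum_comp]
    refine Finset.sum_congr rfl fun ψ _ => ?_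
    have hψ : Equiv.arrowCongr σ (Equiv.refl n) ψ = ψ ∘ ⇑σ⁻¹ := rfl
    have hM : M.submatrix id (ψ ∘ ⇑σ⁻¹) = (M.submatrix id ψ).submatrix id ⇑σ⁻¹ := rfl
    have hsign : ((Equiv.Perm.sign σ : ℤ) : R) * (Equiv.Perm.sign σ : ℤ) = 1 := by
      rw [← Int.cast_mul, ← Units.val_mul, Int.units_mul_self, Units.val_one, Int.cast_one]
    rw [hψ, hM, det_permute', Equiv.Perm.sign_inv]
    simp only [Function.comp_apply, Equiv.Perm.inv_def, Equiv.symm_apply_apply]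
    linear_combination (∏ i, N (ψ i) i) * (M.submatrix id ψ).det * hsign
  simp only [det_apply' (N.submatrix _ id), submatrix_apply, id_eq, Finset.mul_sum]
  rw [Finset.sum_comm]
  simp only [hσ, Finset.sum_const, Finset.card_univ, Fintype.card_perm, nsmul_eq_mul]

theorem sum_rows_det_submatrix_sq [Fintype m] (N : Matrix m n R) (g : ι → n) :
    ∑ f : ι → m, (N.submatrix f g).det ^ 2
      = (Fintype.card ι).factorial * ((Nᵀ * N).submatrix g g).det := by
  rw [submatrix_mul _ _ g id g Function.bijective_id, ← sum_det_submatrix_mul_det_submatrix]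
  refine Finset.sum_congr rfl fun f _ => ?_
  rw [sq]
  exact congrArg (· * _) (det_transpose _).symm

theorem sum_cols_det_submatrix_sq [Fintype n] (W : Matrix m n R) (f : ι → m) :
    ∑ g : ι → n, (W.submatrix f g).det ^ 2
      = (Fintype.card ι).factorial * ((W * Wᵀ).submatrix f f).det := by
  simpa only [← transpose_submatrix, det_transpose, transpose_transpose] using
    sum_rows_det_submatrix_sq Wᵀ f

theorem sum_sum_det_submatrix_sq_eq_of_transpose_mul_self_eq [Fintype m] [Fintype n] [Fintype p]
    {B : Matrix m n R} {W : Matrix p n R} (h : Bᵀ * B = Wᵀ * W) :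
    ∑ f : ι → m, ∑ g : ι → n, (B.submatrix f g).det ^ 2
      = ∑ f : ι → p, ∑ g : ι → n, (W.submatrix f g).det ^ 2 := by
  rw [Finset.sum_comm, Finset.sum_comm (γ := ι → p)]
  simp only [sum_rows_det_submatrix_sq, h]

theorem det_submatrix_comp_perm_sq (A : Matrix m n R) (f : ι → m) (g : ι → n)
    (σ : Equiv.Perm ι) : (A.submatrix (f ∘ σ) g).det ^ 2 = (A.submatrix f g).det ^ 2 := by
  rw [show A.submatrix (f ∘ σ) g = (A.submatrix f g).submatrix σ id from rfl, det_permute,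
    mul_pow, ← Int.cast_pow, ← Units.val_pow_eq_pow_val, Int.units_sq, Units.val_one,
    Int.cast_one, one_mul]

theorem factorial_sq_mul_prod_le_sum_sum_det_submatrix_sq [Fintype n] [Fintype p]
    [DecidableEq p] [LinearOrder R] [IsStrictOrderedRing R]
    {W : Matrix p n R} {lam : p → R} (hW : W * Wᵀ = diagonal lam)
    {f₀ : ι → p} (hf₀ : Function.Injective f₀) :
    ((Fintype.card ι).factorial : R) ^ 2 * ∏ i, lam (f₀ i)
      ≤ ∑ f : ι → p, ∑ g : ι → n, (W.submatrix f g).det ^ 2 := by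
  calc ((Fintype.card ι).factorial : R) ^ 2 * ∏ i, lam (f₀ i)
      = (Fintype.card ι).factorial • ∑ g : ι → n, (W.submatrix f₀ g).det ^ 2 := by
        rw [sum_cols_det_submatrix_sq, hW, submatrix_diagonal _ _ hf₀, det_diagonal, nsmul_eq_mul]
        simp only [Function.comp_apply]
        ring
    _ ≤ _ := factorial_nsmul_le_sum_of_comp_perm
        (F := fun f => ∑ g : ι → n, (W.submatrix f g).det ^ 2)
        (fun f => Finset.sum_nonneg fun g _ => sq_nonneg _)
        (fun f σ => Finset.sum_congr rfl fun g _ => det_submatrix_comp_perm_sq W f g σ) hf₀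

theorem injective_of_det_submatrix_ne_zero [DecidableEq m] [DecidableEq n]
    {A : Matrix m n R} {f : ι → m} {g : ι → n}
    (h : (A.submatrix f g).det ≠ 0) : Function.Injective f ∧ Function.Injective g := by
  refine ⟨fun i j hij => ?_, fun i j hij => ?_⟩ <;> by_contra hne <;> apply h
  · exact det_zero_of_row_eq hne (funext fun k => by simp [hij])
  · exact det_zero_of_column_eq hne fun k => by simp [hij]

theorem exists_transpose_mul_self_eq_and_mul_transpose_eq_diagonal [Fintype m] [Fintype n]
    [DecidableEq n] {B : Matrix m n ℝ} {U : Matrix n n ℝ} {lam : n → ℝ}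
    (hU : Uᵀ * U = 1) (hB : Bᵀ * B = Uᵀ * diagonal lam * U) :
    ∃ W : Matrix n n ℝ, Bᵀ * B = Wᵀ * W ∧ W * Wᵀ = diagonal lam := by
  have hUU : U * Uᵀ = 1 := mul_eq_one_comm.mp hU
  have hD : diagonal lam = (B * Uᵀ)ᴴ * (B * Uᵀ) :=
    calc diagonal lam = (U * Uᵀ) * diagonal lam * (U * Uᵀ) := by
          rw [hUU, Matrix.one_mul, Matrix.mul_one]
      _ = U * (Bᵀ * B) * Uᵀ := by simp only [hB, Matrix.mul_assoc]
      _ = (B * Uᵀ)ᴴ * (B * Uᵀ) := by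
          rw [conjTranspose_eq_transpose_of_trivial, transpose_mul, transpose_transpose]
          simp only [Matrix.mul_assoc]
  have hlam (i : n) : 0 ≤ lam i := by
    have := (posSemidef_conjTranspose_mul_self (B * Uᵀ)).diag_nonneg (i := i)
    rwa [← hD, diagonal_apply_eq] at this
  have hsq : diagonal (fun i => √(lam i)) * diagonal (fun i => √(lam i)) = diagonal lam := by
    rw [diagonal_mul_diagonal]
    exact congrArg diagonal (funext fun i => Real.mul_self_sqrt (hlam i))
  refine ⟨diagonal (fun i => √(lam i)) * U, ?_, ?_⟩
  · rw [hB, transpose_mul, diagonal_transpose, ← hsq]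
    simp only [Matrix.mul_assoc]
  · rw [transpose_mul, diagonal_transpose, Matrix.mul_assoc, ← Matrix.mul_assoc U, hUU,
      Matrix.one_mul, hsq]

end Matrix

theorem Real.pow_div_exp_one_le_factorial (n : ℕ) : ((n : ℝ) / exp 1) ^ n ≤ n.factorial := by
  have h := Real.pow_div_factorial_le_exp (n : ℝ) (Nat.cast_nonneg n) n
  rw [div_le_iff₀ (by positivity)] at h
  rw [div_pow, div_le_iff₀ (by positivity), ← Real.exp_nat_mul, mul_one, mul_comm]
  exact h

theorem Real.pow_le_of_factorial_sq_mul_pow_le {l m d : ℕ} (hm : 0 < m) (hd : 0 < d) {s M : ℝ}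
    (hs : 0 ≤ s)
    (h : (l.factorial : ℝ) ^ 2 * (d * s / (3 * m)) ^ l ≤ (m ^ l * d ^ l) * M) :
    (s * (l : ℝ) ^ 2 / (3 * exp 1 ^ 2 * (m : ℝ) ^ 2)) ^ l ≤ M := by
  have hm : (0 : ℝ) < m := by exact_mod_cast hm
  have hd : (0 : ℝ) < d := by exact_mod_cast hd
  calc (s * (l : ℝ) ^ 2 / (3 * exp 1 ^ 2 * (m : ℝ) ^ 2)) ^ l
      = (((l : ℝ) / exp 1) ^ 2 * (d * s / (3 * m)) / (m * d)) ^ l := by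
        congr 1
        field_simp
    _ = (((l : ℝ) / exp 1) ^ l) ^ 2 * (d * s / (3 * m)) ^ l / (m ^ l * d ^ l) := by ring
    _ ≤ (l.factorial : ℝ) ^ 2 * (d * s / (3 * m)) ^ l / (m ^ l * d ^ l) := by
        gcongr ?_ ^ 2 * _ / _
        exact pow_div_exp_one_le_factorial l
    _ ≤ M := by
        rw [div_le_iff₀ (by positivity)]
        linarith

theorem Real.rpow_div_two_le_abs {X x : ℝ} (hX : 0 ≤ X) {l : ℕ} (h : X ^ l ≤ x ^ 2) :
    X ^ ((l : ℝ) / 2) ≤ |x| := by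
  rw [← Real.sqrt_sq_eq_abs]
  refine Real.le_sqrt_of_sq_le ?_
  rwa [← Real.rpow_natCast _ 2, ← Real.rpow_mul hX, Nat.cast_ofNat,
    div_mul_cancel₀ _ two_ne_zero, Real.rpow_natCast]

/-- If the `l`-th largest eigenvalue of `Bᵀ B` is at least `ds/(3m)`, then `B` has an `l × l`
submatrix `F` with `|det F| ≥ (s l² / (3 e² m²))^{l/2}`. -/
theorem stmt_2 {m d : ℕ} (hmd : m ≤ d) (B : Matrix (Fin m) (Fin d) ℝ)
    (lam : Fin d → ℝ)
    (hmono : ∀ i j : Fin d, i ≤ j → lam j ≤ lam i)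
    (hdiag : ∃ U : Matrix (Fin d) (Fin d) ℝ,
      Uᵀ * U = 1 ∧ Bᵀ * B = Uᵀ * Matrix.diagonal lam * U)
    (s : ℝ) (hs : 0 < s)
    (l : ℕ) (hl : 1 ≤ l) (hlm : l ≤ m)
    (heig : (d : ℝ) * s / (3 * m) ≤ lam ⟨l - 1, by omega⟩) :
    ∃ (f : Fin l → Fin m) (g : Fin l → Fin d),
      Function.Injective f ∧ Function.Injective g ∧
      (s * (l : ℝ) ^ 2 / (3 * Real.exp 1 ^ 2 * (m : ℝ) ^ 2)) ^ ((l : ℝ) / 2)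
        ≤ |(B.submatrix f g).det| := by
  obtain ⟨U, hU, hBU⟩ := hdiag
  obtain ⟨W, hBW, hWW⟩ := exists_transpose_mul_self_eq_and_mul_transpose_eq_diagonal hU hBU
  let g₀ : Fin l → Fin d := Fin.castLE (hlm.trans hmd)
  have hc (i : Fin l) : (d : ℝ) * s / (3 * m) ≤ lam (g₀ i) :=
    heig.trans (hmono _ _ (Fin.le_def.mpr (by simp [g₀]; omega)))
  have : Nonempty ((Fin l → Fin m) × (Fin l → Fin d)) := ⟨(Fin.castLE hlm, g₀)⟩
  obtain ⟨⟨f, g⟩, hmax⟩ := Finite.exists_max fun p : (Fin l → Fin m) × (Fin l → Fin d) =>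
    (B.submatrix p.1 p.2).det ^ 2
  have hcount : (l.factorial : ℝ) ^ 2 * ((d : ℝ) * s / (3 * m)) ^ l
      ≤ (m ^ l * d ^ l) * (B.submatrix f g).det ^ 2 :=
    calc (l.factorial : ℝ) ^ 2 * ((d : ℝ) * s / (3 * m)) ^ l
        ≤ (l.factorial : ℝ) ^ 2 * ∏ i, lam (g₀ i) := by
          gcongr
          rw [← Fin.prod_const]
          exact Finset.prod_le_prod (fun _ _ => by positivity) fun i _ => hc i
      _ ≤ ∑ φ : Fin l → Fin d, ∑ ψ : Fin l → Fin d, (W.submatrix φ ψ).det ^ 2 := by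
          simpa using factorial_sq_mul_prod_le_sum_sum_det_submatrix_sq hWW (Fin.castLE_injective _)
      _ = ∑ φ : Fin l → Fin m, ∑ ψ : Fin l → Fin d, (B.submatrix φ ψ).det ^ 2 :=
          (sum_sum_det_submatrix_sq_eq_of_transpose_mul_self_eq hBW).symm
      _ ≤ ∑ _φ : Fin l → Fin m, ∑ _ψ : Fin l → Fin d, (B.submatrix f g).det ^ 2 :=
          Finset.sum_le_sum fun φ _ => Finset.sum_le_sum fun ψ _ => hmax (φ, ψ)
      _ = (m ^ l * d ^ l) * (B.submatrix f g).det ^ 2 := by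
          simp only [Finset.sum_const, Finset.card_univ, Fintype.card_fun, Fintype.card_fin,
            nsmul_eq_mul, Nat.cast_pow]
          ring
  have hX := Real.pow_le_of_factorial_sq_mul_pow_le (by omega) (by omega) hs.le hcount
  have hXpos : 0 < s * (l : ℝ) ^ 2 / (3 * Real.exp 1 ^ 2 * (m : ℝ) ^ 2) := by
    have : (0 : ℝ) < m := by exact_mod_cast (show 0 < m by omega)
    positivity
  have hdet : (B.submatrix f g).det ≠ 0 := fun h => by
    rw [h, zero_pow two_ne_zero] at hX
    exact (pow_pos hXpos l).not_ge hX
  obtain ⟨hf, hg⟩ := injective_of_det_submatrix_ne_zero hdet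
  exact ⟨f, g, hf, hg, Real.rpow_div_two_le_abs hXpos.le hX⟩
end

section
/- Let B ∈ R^{m×d} with d ≥ m, s > 0, 0 < ε ≤ 1/4, and let g ∈ R^d be a standard Gaussian. If P_g(|‖Bg/√s‖² − ‖g‖²| > ε‖g‖²) < 4δ and d ≥ ε^{−2} log(1/δ), then P_g( ‖Bg‖² ∉ (1 − 2ε + ε², 1 + 2ε + ε²)·ds ) ≤ 6δ^{1/8}. -/
open Real Matrix MeasureTheory ProbabilityTheory
open scoped NNReal ENNReal



lemma exp_quad {x : ℝ} (hx : 0 ≤ x) : 1 + x + x^2/4 ≤ Real.exp x := by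
  have h := Real.add_one_le_exp (x/2)
  have h0 : (0:ℝ) ≤ x/2 + 1 := by linarith
  have h2 := mul_le_mul h h h0 (Real.exp_pos _).le
  rw [← Real.exp_add, show x/2 + x/2 = x by ring] at h2
  nlinarith [h2]

lemma log_one_add_le {u : ℝ} (h0 : 0 ≤ u) (h1 : u ≤ 1) : Real.log (1+u) ≤ u - u^2/6 := by
  rw [Real.log_le_iff_le_exp (by linarith)]
  have hx : 0 ≤ u - u^2/6 := by nlinarith
  refine le_trans ?_ (exp_quad hx)
  nlinarith

lemma log_one_add_ge {u : ℝ} (h0 : 0 ≤ u) : u/(1+u) ≤ Real.log (1+u) := by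
  have h1 : (0:ℝ) < 1 + u := by linarith
  have h := Real.log_le_sub_one_of_pos (show (0:ℝ) < (1+u)⁻¹ by positivity)
  rw [Real.log_inv] at h
  have h2 : (1+u)⁻¹ - 1 = -(u/(1+u)) := by field_simp; ring
  linarith [h2 ▸ h]



lemma gauss_pdf_eq (x : ℝ) :
    gaussianPDFReal 0 1 x = (Real.sqrt (2*π))⁻¹ * Real.exp (-(1/2) * x^2) := by
  simp only [gaussianPDFReal, NNReal.coe_one, mul_one, sub_zero]
  ring_nf

lemma integrable_exp_sq_gauss {t : ℝ} (ht : t < 1/2) :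
    Integrable (fun x => Real.exp (t * x ^ 2)) (gaussianReal 0 1) := by
  rw [gaussianReal_of_var_ne_zero 0 one_ne_zero,
    integrable_withDensity_iff (measurable_gaussianPDF 0 1)
      (Filter.Eventually.of_forall fun x => ENNReal.ofReal_lt_top)]
  have : (fun x => Real.exp (t * x^2) * (gaussianPDF 0 1 x).toReal)
      = fun x => (Real.sqrt (2*π))⁻¹ * Real.exp (-(1/2 - t) * x^2) := by
    funext x
    rw [gaussianPDF, ENNReal.toReal_ofReal (gaussianPDFReal_nonneg 0 1 x), gauss_pdf_eq,
      ← mul_assoc, mul_comm (Real.exp _), mul_assoc, ← Real.exp_add]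
    ring_nf
  rw [this]
  exact (integrable_exp_neg_mul_sq (by linarith)).const_mul _

lemma integral_exp_sq_gauss {t : ℝ} (ht : t < 1/2) :
    ∫ x, Real.exp (t * x ^ 2) ∂(gaussianReal 0 1) = (Real.sqrt (1 - 2*t))⁻¹ := by
  rw [gaussianReal_of_var_ne_zero 0 one_ne_zero]
  have hd : (gaussianPDF 0 1) = fun x => ((Real.toNNReal (gaussianPDFReal 0 1 x) : ℝ≥0) : ℝ≥0∞) := by
    funext x; rfl
  rw [hd, integral_withDensity_eq_integral_smul
    ((measurable_gaussianPDFReal 0 1).real_toNNReal) _]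
  have : (fun x => Real.toNNReal (gaussianPDFReal 0 1 x) • Real.exp (t * x^2))
      = fun x => (Real.sqrt (2*π))⁻¹ * Real.exp (-(1/2 - t) * x^2) := by
    funext x
    rw [NNReal.smul_def, smul_eq_mul, Real.coe_toNNReal _ (gaussianPDFReal_nonneg 0 1 x),
      gauss_pdf_eq, mul_assoc, ← Real.exp_add]
    ring_nf
  rw [this, integral_const_mul, integral_gaussian]
  have hb : (0:ℝ) < 1/2 - t := by linarith
  have hπ : (0:ℝ) < π := Real.pi_pos
  rw [show π / (1/2 - t) = π * (1/2 - t)⁻¹ by ring, Real.sqrt_mul hπ.le]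
  rw [Real.sqrt_inv,
    show (1:ℝ) - 2*t = 2*(1/2 - t) by ring,
    Real.sqrt_mul (by norm_num : (0:ℝ) ≤ 2), Real.sqrt_mul (by norm_num : (0:ℝ) ≤ 2)]
  have s2 : Real.sqrt 2 ≠ 0 := by positivity
  have sp : Real.sqrt π ≠ 0 := by positivity
  have sb : Real.sqrt (1/2 - t) ≠ 0 := by positivity
  field_simp



lemma pi_gauss_integral {d : ℕ} (f : ℝ → ℝ) :
    ∫ y : Fin d → ℝ, ∏ i, f (y i) ∂(Measure.pi fun _ : Fin d => gaussianReal 0 1)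
      = (∫ x, f x ∂(gaussianReal 0 1)) ^ d := by
  letI : MeasureSpace ℝ := ⟨gaussianReal 0 1⟩
  haveI : SigmaFinite (volume : Measure ℝ) :=
    inferInstanceAs (SigmaFinite (gaussianReal 0 1))
  have h := MeasureTheory.integral_fintype_prod_eq_pow (𝕜 := ℝ) (ι := Fin d) f (μ := gaussianReal 0 1)
  simpa using h

lemma pi_gauss_integrable {d : ℕ} (f : ℝ → ℝ) (hf : Integrable f (gaussianReal 0 1)) :
    Integrable (fun y : Fin d → ℝ => ∏ i, f (y i))
      (Measure.pi fun _ : Fin d => gaussianReal 0 1) := by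
  letI : MeasureSpace ℝ := ⟨gaussianReal 0 1⟩
  haveI : SigmaFinite (volume : Measure ℝ) :=
    inferInstanceAs (SigmaFinite (gaussianReal 0 1))
  exact MeasureTheory.Integrable.fintype_prod (𝕜 := ℝ) (f := fun _ : Fin d => f) fun _ => hf



lemma exp_sum_sq (d : ℕ) (t : ℝ) :
    (fun y : Fin d → ℝ => Real.exp (t * ∑ i, y i ^ 2))
      = fun y : Fin d → ℝ => ∏ i, Real.exp (t * y i ^ 2) := by
  funext y
  rw [Finset.mul_sum, Real.exp_sum]

lemma integrable_exp_sum_sq {d : ℕ} {t : ℝ} (ht : t < 1/2) :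
    Integrable (fun y : Fin d → ℝ => Real.exp (t * ∑ i, y i ^ 2))
      (Measure.pi fun _ : Fin d => gaussianReal 0 1) := by
  rw [exp_sum_sq]
  exact pi_gauss_integrable _ (integrable_exp_sq_gauss ht)

lemma mgf_sum_sq {d : ℕ} {t : ℝ} (ht : t < 1/2) :
    mgf (fun y : Fin d → ℝ => ∑ i, y i ^ 2)
      (Measure.pi fun _ : Fin d => gaussianReal 0 1) t
      = ((Real.sqrt (1 - 2*t))⁻¹) ^ d := by
  rw [mgf, exp_sum_sq,
    pi_gauss_integral (fun x => Real.exp (t * x ^ 2)), integral_exp_sq_gauss ht]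

lemma chernoff_val {d : ℕ} {t c r : ℝ} (ht : t < 1/2)
    (h : -t*c - (d:ℝ)/2 * Real.log (1-2*t) ≤ r) :
    Real.exp (-t*c) * ((Real.sqrt (1 - 2*t))⁻¹) ^ d ≤ Real.exp r := by
  have h1 : (0:ℝ) < 1 - 2*t := by linarith
  have hv : (0:ℝ) < (Real.sqrt (1 - 2*t))⁻¹ := by positivity
  rw [← Real.exp_log hv, ← Real.exp_nat_mul, ← Real.exp_add, Real.exp_le_exp,
    Real.log_inv, Real.log_sqrt h1.le]
  calc -t*c + (d:ℝ) * -(Real.log (1-2*t)/2)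
      = -t*c - (d:ℝ)/2 * Real.log (1-2*t) := by ring
    _ ≤ r := h

lemma upper_tail {d : ℕ} {ε δ : ℝ} (hε : 0 < ε) (hε' : ε ≤ 1/4) (hδ : 0 < δ)
    (hdd : Real.log (1/δ) ≤ (d:ℝ) * ε^2) :
    ((Measure.pi fun _ : Fin d => gaussianReal 0 1)
      {y : Fin d → ℝ | (1+ε)*(d:ℝ) ≤ ∑ i, y i ^ 2}).toReal ≤ δ ^ ((1:ℝ)/8) := by
  have ht2 : 3*ε/10 < 1/2 := by linarith
  have h := measure_ge_le_exp_mul_mgf (μ := Measure.pi fun _ : Fin d => gaussianReal 0 1)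
      (X := fun y : Fin d → ℝ => ∑ i, y i ^ 2) (t := 3*ε/10) ((1+ε)*(d:ℝ))
      (by linarith) (integrable_exp_sum_sq ht2)
  rw [mgf_sum_sq ht2] at h
  refine h.trans ?_
  rw [Real.rpow_def_of_pos hδ]
  apply chernoff_val ht2
  -- key scalar inequality
  have key : -(3*ε/10)*(1+ε) - (1/2)*Real.log (1-2*(3*ε/10)) ≤ -ε^2/8 := by
    set u := 3*ε/(5-3*ε) with hudef
    have h53 : (0:ℝ) < 5 - 3*ε := by linarith
    have hu0 : 0 ≤ u := by positivity
    have hu1 : u ≤ 1 := by rw [hudef, div_le_one h53]; linarith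
    have h1u : 1 - 2*(3*ε/10) = (1+u)⁻¹ := by
      rw [hudef]
      have h5 : (1 + 3*ε/(5-3*ε)) = 5/(5-3*ε) := by field_simp; ring
      rw [h5, inv_div]
      ring
    have hL : Real.log (1-2*(3*ε/10)) = -Real.log (1+u) := by rw [h1u, Real.log_inv]
    have hlb := log_one_add_le hu0 hu1
    have hu : u * (5-3*ε) = 3*ε := by rw [hudef]; field_simp
    rw [hL]
    nlinarith [hu, hlb, sq_nonneg u, sq_nonneg ε, mul_pos hε hε]
  have hlogδ : Real.log δ = -Real.log (1/δ) := by rw [one_div, Real.log_inv, neg_neg]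
  have hd0 : (0:ℝ) ≤ (d:ℝ) := Nat.cast_nonneg d
  have := mul_le_mul_of_nonneg_left key hd0
  rw [hlogδ]
  nlinarith [this, hdd]

lemma lower_tail {d : ℕ} {ε δ : ℝ} (hε : 0 < ε) (hε' : ε ≤ 1/4) (hδ : 0 < δ)
    (hdd : Real.log (1/δ) ≤ (d:ℝ) * ε^2) :
    ((Measure.pi fun _ : Fin d => gaussianReal 0 1)
      {y : Fin d → ℝ | ∑ i, y i ^ 2 ≤ (1-ε)*(d:ℝ)}).toReal ≤ δ ^ ((1:ℝ)/8) := by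
  have ht2 : -(ε/4) < 1/2 := by linarith
  have h := measure_le_le_exp_mul_mgf (μ := Measure.pi fun _ : Fin d => gaussianReal 0 1)
      (X := fun y : Fin d → ℝ => ∑ i, y i ^ 2) (t := -(ε/4)) ((1-ε)*(d:ℝ))
      (by linarith) (integrable_exp_sum_sq ht2)
  rw [mgf_sum_sq ht2] at h
  refine h.trans ?_
  rw [Real.rpow_def_of_pos hδ]
  apply chernoff_val ht2
  have key : -(-(ε/4))*(1-ε) - (1/2)*Real.log (1-2*(-(ε/4))) ≤ -ε^2/8 := by
    have h2ε : (0:ℝ) < 2 + ε := by linarith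
    have hw : (ε/2)/(1+ε/2) = ε/(2+ε) := by
      rw [div_eq_div_iff (by linarith) (by linarith)]
      ring
    have hlb := log_one_add_ge (u := ε/2) (by linarith)
    rw [hw] at hlb
    have h1 : 1 - 2*(-(ε/4)) = 1 + ε/2 := by ring
    rw [h1]
    have hq : ε/(2+ε) * (2+ε) = ε := by field_simp
    nlinarith [hlb, hq, sq_nonneg ε]
  have hlogδ : Real.log δ = -Real.log (1/δ) := by rw [one_div, Real.log_inv, neg_neg]
  have hd0 : (0:ℝ) ≤ (d:ℝ) := Nat.cast_nonneg d
  have := mul_le_mul_of_nonneg_left key hd0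
  rw [hlogδ]
  nlinarith [this, hdd]



/-- If `P_g(|‖Bg/√s‖² − ‖g‖²| > ε‖g‖²) < 4δ` and `d ≥ ε⁻² log(1/δ)`, then
`P_g(‖Bg‖² ∉ (1−2ε+ε², 1+2ε+ε²)·ds) ≤ 6 δ^{1/8}`, `g` a standard Gaussian in `ℝ^d`. -/
theorem stmt_13 {m d : ℕ} (hmd : m ≤ d) (B : Matrix (Fin m) (Fin d) ℝ)
    (s ε δ : ℝ) (hs : 0 < s) (hε : 0 < ε) (hε' : ε ≤ 1 / 4) (hδ : 0 < δ) (hδ' : δ < 1)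
    (hd : (1 / ε ^ 2) * Real.log (1 / δ) ≤ (d : ℝ))
    (hg : (Measure.pi fun _ : Fin d => gaussianReal 0 1)
        {y : Fin d → ℝ |
          ε * ∑ i, y i ^ 2 < |(∑ i, (B.mulVec y) i ^ 2) / s - ∑ i, y i ^ 2|}
      < ENNReal.ofReal (4 * δ)) :
    (Measure.pi fun _ : Fin d => gaussianReal 0 1)
        {y : Fin d → ℝ |
          (∑ i, (B.mulVec y) i ^ 2) ∉
            Set.Ioo ((1 - 2 * ε + ε ^ 2) * d * s) ((1 + 2 * ε + ε ^ 2) * d * s)}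
      ≤ ENNReal.ofReal (6 * δ ^ ((1 : ℝ) / 8)) := by
  set μpi := Measure.pi fun _ : Fin d => gaussianReal 0 1 with hμ
  have hdd : Real.log (1/δ) ≤ (d:ℝ) * ε^2 := by
    have hε2 : (0:ℝ) < ε^2 := by positivity
    have h1 := mul_le_mul_of_nonneg_right hd hε2.le
    have h2 : 1/ε^2 * Real.log (1/δ) * ε^2 = Real.log (1/δ) := by field_simp
    linarith [h1, h2]
  set A := {y : Fin d → ℝ |
      ε * ∑ i, y i ^ 2 < |(∑ i, (B.mulVec y) i ^ 2) / s - ∑ i, y i ^ 2|} with hA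
  set L := {y : Fin d → ℝ | ∑ i, y i ^ 2 ≤ (1-ε)*(d:ℝ)} with hL
  set U := {y : Fin d → ℝ | (1+ε)*(d:ℝ) ≤ ∑ i, y i ^ 2} with hU
  have hsub : {y : Fin d → ℝ |
        (∑ i, (B.mulVec y) i ^ 2) ∉
          Set.Ioo ((1 - 2 * ε + ε ^ 2) * d * s) ((1 + 2 * ε + ε ^ 2) * d * s)}
      ⊆ A ∪ (L ∪ U) := by
    intro y hy
    by_contra hc
    simp only [hA, hL, hU, Set.mem_union, Set.mem_setOf_eq, not_or, not_lt, not_le] at hc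
    obtain ⟨h1, h2, h3⟩ := hc
    apply hy
    have habs := abs_le.mp h1
    have hQd : (0:ℝ) ≤ (d:ℝ) := Nat.cast_nonneg d
    constructor
    · have hlt : (1 - 2*ε + ε^2)*(d:ℝ) < (∑ i, (B.mulVec y) i ^ 2) / s := by
        nlinarith [habs.1, h2, hε, hε', hQd]
      have := (lt_div_iff₀ hs).mp hlt
      linarith
    · have hlt : (∑ i, (B.mulVec y) i ^ 2) / s < (1 + 2*ε + ε^2)*(d:ℝ) := by
        nlinarith [habs.2, h3, hε, hε', hQd]
      have := (div_lt_iff₀ hs).mp hlt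
      linarith
  have hconv : ∀ (S : Set (Fin d → ℝ)) (b : ℝ), (μpi S).toReal ≤ b →
      μpi S ≤ ENNReal.ofReal b := by
    intro S b hb
    rw [← ENNReal.ofReal_toReal (measure_ne_top μpi S)]
    exact ENNReal.ofReal_le_ofReal hb
  have hLb : μpi L ≤ ENNReal.ofReal (δ ^ ((1:ℝ)/8)) :=
    hconv _ _ (lower_tail hε hε' hδ hdd)
  have hUb : μpi U ≤ ENNReal.ofReal (δ ^ ((1:ℝ)/8)) :=
    hconv _ _ (upper_tail hε hε' hδ hdd)
  have hδle : δ ≤ δ ^ ((1:ℝ)/8) := by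
    have := Real.rpow_le_rpow_of_exponent_ge hδ hδ'.le (by norm_num : (1:ℝ)/8 ≤ 1)
    rwa [Real.rpow_one] at this
  have hr0 : (0:ℝ) ≤ δ ^ ((1:ℝ)/8) := by positivity
  calc μpi _ ≤ μpi (A ∪ (L ∪ U)) := measure_mono hsub
    _ ≤ μpi A + μpi (L ∪ U) := measure_union_le _ _
    _ ≤ μpi A + (μpi L + μpi U) := by
        exact add_le_add_right (measure_union_le _ _) _
    _ ≤ ENNReal.ofReal (4*δ) +
        (ENNReal.ofReal (δ ^ ((1:ℝ)/8)) + ENNReal.ofReal (δ ^ ((1:ℝ)/8))) := by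
        exact add_le_add hg.le (add_le_add hLb hUb)
    _ ≤ ENNReal.ofReal (6 * δ ^ ((1:ℝ)/8)) := by
        rw [← ENNReal.ofReal_add hr0 hr0, ← ENNReal.ofReal_add (by linarith) (by linarith)]
        exact ENNReal.ofReal_le_ofReal (by linarith)
end
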